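/- Let K : [0,1] → ℝ be continuous and let b > 0. For a measurable function h : [0,b] → [0,1], define ψ_h : [0,b] → ℝ by ψ_h(x) = x ∫₀ˣ K(y/x) h(y) dy for x ∈ (0,b] and ψ_h(0) = 0. Then the family {ψ_h : h measurable, 0 ≤ h ≤ 1} is uniformly bounded and uniformly equicontinuous on [0,b]: for every ε > 0 there exists δ > 0 such that |ψ_h(x) − ψ_h(y)| < ε for all such h and all x, y ∈ [0,b] with |x − y| < δ. In particular, for y, z ∈ (0,b], |ψ_h(z)/z − ψ_h(y)/y| ≤ ∫₀^{max{y,z}} |K(θ/z) − K(θ/y)| dθ, where K is extended by 0 outside [0,1]. -/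

import Mathlib

open MeasureTheory Set Filter Topology

/-- The kernel K extended by 0 outside [0,1]. -/
noncomputable def Kext (K : ℝ → ℝ) (θ : ℝ) : ℝ :=
  if θ ∈ Set.Icc (0:ℝ) 1 then K θ else 0

/-- ψ_h(x) = x ∫₀ˣ K(y/x) h(y) dy (equal to 0 at x = 0). -/
noncomputable def psiFam (K : ℝ → ℝ) (h : ℝ → ℝ) (x : ℝ) : ℝ :=
  x * ∫ y in (0:ℝ)..x, Kext K (y / x) * h y

lemma Kext_measurable (K : ℝ → ℝ) (hK : ContinuousOn K (Icc 0 1)) :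
    Measurable (Kext K) := by
  have hc : Continuous (fun θ : ℝ => K (min 1 (max 0 θ))) := by
    apply hK.comp_continuous (continuous_const.min (continuous_const.max continuous_id))
    intro x
    exact ⟨le_min zero_le_one (le_max_left 0 x), min_le_left 1 _⟩
  have : Kext K = (Icc (0:ℝ) 1).indicator (fun θ => K (min 1 (max 0 θ))) := by
    funext θ
    simp only [Kext, indicator]
    split_ifs with hmem
    · rw [max_eq_right hmem.1, min_eq_right hmem.2]
    · rfl
  rw [this]
  exact hc.measurable.indicator measurableSet_Icc

lemma Kext_bound (K : ℝ → ℝ) (hK : ContinuousOn K (Icc 0 1)) :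
    ∃ M : ℝ, 1 ≤ M ∧ ∀ θ, |Kext K θ| ≤ M := by
  obtain ⟨C, hC⟩ := isCompact_Icc.exists_bound_of_continuousOn hK
  refine ⟨max C 1, le_max_right _ _, fun θ => ?_⟩
  unfold Kext
  split_ifs with hmem
  · exact le_trans (hC θ hmem) (le_max_left _ _)
  · simp only [abs_zero]
    exact le_trans zero_le_one (le_max_right C 1)

lemma Kext_zero_of_gt (K : ℝ → ℝ) {z θ : ℝ} (hz : 0 < z) (hθ : z < θ) :
    Kext K (θ / z) = 0 := by
  unfold Kext
  rw [if_neg]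
  intro hmem
  exact absurd hmem.2 (not_le.mpr ((one_lt_div hz).mpr hθ))

lemma intervalIntegrable_of_bounded {f : ℝ → ℝ} (hf : Measurable f) {M a c : ℝ}
    (hM : ∀ t, |f t| ≤ M) : IntervalIntegrable f volume a c := by
  apply IntervalIntegrable.mono_fun' (g := fun _ => M) intervalIntegrable_const
    hf.aestronglyMeasurable
  exact Filter.Eventually.of_forall fun t => hM t

lemma prod_bound {K h : ℝ → ℝ} {M : ℝ} (hM : ∀ θ, |Kext K θ| ≤ M)
    (hh1 : ∀ y, |h y| ≤ 1) (z t : ℝ) : |Kext K (t / z) * h t| ≤ M := by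
  rw [abs_mul]
  calc |Kext K (t / z)| * |h t| ≤ M * 1 :=
        mul_le_mul (hM _) (hh1 t) (abs_nonneg _) (le_trans (abs_nonneg _) (hM 0))
    _ = M := mul_one M

lemma prod_integrable {K h : ℝ → ℝ} (hKm : Measurable (Kext K)) (hh : Measurable h)
    {M : ℝ} (hM : ∀ θ, |Kext K θ| ≤ M) (hh1 : ∀ y, |h y| ≤ 1) (z a c : ℝ) :
    IntervalIntegrable (fun t => Kext K (t / z) * h t) volume a c :=
  intervalIntegrable_of_bounded ((hKm.comp (measurable_id.div_const z)).mul hh)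
    (prod_bound hM hh1 z)

lemma integral_Kext_ext (K h : ℝ → ℝ) (hKm : Measurable (Kext K)) (hh : Measurable h)
    {M : ℝ} (hM : ∀ θ, |Kext K θ| ≤ M) (hh1 : ∀ y, |h y| ≤ 1)
    {z m : ℝ} (hz : 0 < z) (hzm : z ≤ m) :
    ∫ θ in (0:ℝ)..m, Kext K (θ / z) * h θ = ∫ θ in (0:ℝ)..z, Kext K (θ / z) * h θ := by
  rw [← intervalIntegral.integral_add_adjacent_intervals
    (prod_integrable hKm hh hM hh1 z 0 z) (prod_integrable hKm hh hM hh1 z z m)]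
  have : ∫ θ in z..m, Kext K (θ / z) * h θ = 0 := by
    rw [intervalIntegral.integral_of_le hzm]
    apply setIntegral_eq_zero_of_forall_eq_zero
    intro θ hθ
    rw [Kext_zero_of_gt K hz hθ.1, zero_mul]
  rw [this, add_zero]

lemma psi_diff (K h : ℝ → ℝ) (hKm : Measurable (Kext K)) (hh : Measurable h)
    {M : ℝ} (hM : ∀ θ, |Kext K θ| ≤ M) (hh1 : ∀ y, |h y| ≤ 1)
    {x y : ℝ} (hy : 0 ≤ y) (hyx : y ≤ x) :
    psiFam K h x - psiFam K h y =
      (x - y) * (∫ θ in (0:ℝ)..x, Kext K (θ / x) * h θ) +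
      y * ∫ θ in (0:ℝ)..x, (Kext K (θ / x) - Kext K (θ / y)) * h θ := by
  rcases eq_or_lt_of_le hy with h0 | hy0
  · rw [← h0]
    simp only [psiFam, zero_mul, sub_zero]
    ring
  · have hsub : ∫ θ in (0:ℝ)..x, (Kext K (θ / x) - Kext K (θ / y)) * h θ
        = (∫ θ in (0:ℝ)..x, Kext K (θ / x) * h θ)
          - ∫ θ in (0:ℝ)..x, Kext K (θ / y) * h θ := by
      simp only [sub_mul]
      exact intervalIntegral.integral_sub (prod_integrable hKm hh hM hh1 x 0 x)
        (prod_integrable hKm hh hM hh1 y 0 x)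
    have hext := integral_Kext_ext K h hKm hh hM hh1 hy0 hyx
    unfold psiFam
    rw [hsub, hext]
    ring

lemma final_arith (ε M b u v P : ℝ) (hε : 0 < ε) (hM : 0 < M) (hb : 0 < b)
    (hv0 : 0 ≤ v) (hvb : v ≤ b) (hvu : v ≤ u)
    (hdε : u - v < ε / (12 * M * b))
    (hP : P ≤ (u - v) * (M * b) + v * ((ε / (2 * b ^ 2 + 2)) * b + 2 * M * (u - v))) :
    P < ε := by
  have hMne : M ≠ 0 := hM.ne'
  have hbne : b ≠ 0 := hb.ne'
  have hεb : v * ((ε / (2 * b ^ 2 + 2)) * b) ≤ b * ((ε / (2 * b ^ 2 + 2)) * b) :=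
    mul_le_mul_of_nonneg_right hvb (by positivity)
  have he1 : b * ((ε / (2 * b ^ 2 + 2)) * b) < ε / 2 := by
    rw [show b * (ε / (2 * b ^ 2 + 2) * b) = ε * b ^ 2 / (2 * b ^ 2 + 2) by
      field_simp]
    rw [div_lt_div_iff₀ (by positivity) (by norm_num : (0:ℝ) < 2)]
    nlinarith
  have he2 : (u - v) * (M * b) < ε / 12 := by
    calc (u - v) * (M * b) < ε / (12 * M * b) * (M * b) :=
          mul_lt_mul_of_pos_right hdε (by positivity)
      _ = ε / 12 := by field_simp
  have t2 : v * (2 * M * (u - v)) ≤ b * (2 * M * (u - v)) :=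
    mul_le_mul_of_nonneg_right hvb
      (mul_nonneg (by positivity) (sub_nonneg.mpr hvu))
  have t3 : b * (2 * M * (u - v)) < b * (2 * M * (ε / (12 * M * b))) := by
    apply mul_lt_mul_of_pos_left _ hb
    exact mul_lt_mul_of_pos_left hdε (by positivity)
  have t4 : b * (2 * M * (ε / (12 * M * b))) = ε / 6 := by field_simp; ring
  nlinarith [hP, he1, he2, hεb, t2, t3, t4]

/-- The family {ψ_h : h measurable, 0 ≤ h ≤ 1} is uniformly bounded
and uniformly equicontinuous on [0,b], and satisfies the stated quotient estimate. -/
theorem psi_family_equicontinuous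
    (K : ℝ → ℝ) (hKcont : ContinuousOn K (Icc 0 1)) (b : ℝ) (hb : 0 < b) :
    (∃ C : ℝ, ∀ h : ℝ → ℝ, Measurable h → (∀ y, h y ∈ Icc (0:ℝ) 1) →
      ∀ x ∈ Icc (0:ℝ) b, |psiFam K h x| ≤ C) ∧
    (∀ ε > (0:ℝ), ∃ δ > (0:ℝ), ∀ h : ℝ → ℝ, Measurable h → (∀ y, h y ∈ Icc (0:ℝ) 1) →
      ∀ x ∈ Icc (0:ℝ) b, ∀ y ∈ Icc (0:ℝ) b, |x - y| < δ →
        |psiFam K h x - psiFam K h y| < ε) ∧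
    (∀ h : ℝ → ℝ, Measurable h → (∀ y, h y ∈ Icc (0:ℝ) 1) →
      ∀ y ∈ Ioc (0:ℝ) b, ∀ z ∈ Ioc (0:ℝ) b,
        |psiFam K h z / z - psiFam K h y / y| ≤
          ∫ θ in (0:ℝ)..(max y z), |Kext K (θ / z) - Kext K (θ / y)|) := by
  obtain ⟨M, hM1, hMb⟩ := Kext_bound K hKcont
  have hKm := Kext_measurable K hKcont
  have hM0 : (0:ℝ) < M := lt_of_lt_of_le one_pos hM1
  have habs1 : ∀ (h : ℝ → ℝ), (∀ y, h y ∈ Icc (0:ℝ) 1) → ∀ y, |h y| ≤ 1 := by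
    intro h hh01 y
    exact abs_le.mpr ⟨by linarith [(hh01 y).1], (hh01 y).2⟩
  -- pointwise bound: |psiFam K h x| ≤ M * x^2 for 0 ≤ x
  have key : ∀ (h : ℝ → ℝ), (∀ y, |h y| ≤ 1) → ∀ x : ℝ, 0 ≤ x →
      |psiFam K h x| ≤ M * x ^ 2 := by
    intro h hh1 x hx
    unfold psiFam
    rw [abs_mul, abs_of_nonneg hx]
    have hnorm : ‖∫ t in (0:ℝ)..x, Kext K (t / x) * h t‖ ≤ M * |x - 0| :=
      intervalIntegral.norm_integral_le_of_norm_le_const fun t _ => prod_bound hMb hh1 x t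
    rw [Real.norm_eq_abs, sub_zero, abs_of_nonneg hx] at hnorm
    calc x * |∫ t in (0:ℝ)..x, Kext K (t / x) * h t| ≤ x * (M * x) :=
          mul_le_mul_of_nonneg_left hnorm hx
      _ = M * x ^ 2 := by ring
  refine ⟨⟨M * b ^ 2, ?_⟩, ?_, ?_⟩
  · -- Part 1: uniform boundedness
    intro h hh hh01 x hx
    have h2 := key h (habs1 h hh01) x hx.1
    have h3 : x ^ 2 ≤ b ^ 2 := pow_le_pow_left₀ hx.1 hx.2 2
    nlinarith
  · -- Part 2: uniform equicontinuity
    intro ε hε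
    have huc := Metric.uniformContinuousOn_iff.mp
      (isCompact_Icc.uniformContinuousOn_of_continuous hKcont)
    obtain ⟨δ', hδ'0, hK'⟩ := huc (ε / (2 * b ^ 2 + 2)) (by positivity)
    set η : ℝ := min 1 (ε / (8 * M + 8)) with hηdef
    have hη0 : 0 < η := lt_min one_pos (by positivity)
    have hη1 : η ≤ 1 := min_le_left _ _
    have hηε : η ≤ ε / (8 * M + 8) := min_le_right _ _
    refine ⟨min η (min (δ' * η) (ε / (12 * M * b))),
      lt_min hη0 (lt_min (by positivity) (by positivity)), ?_⟩
    intro h hh hh01 x hx y hy hxy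
    have hh1 := habs1 h hh01
    suffices H : ∀ u ∈ Icc (0:ℝ) b, ∀ v ∈ Icc (0:ℝ) b, v ≤ u →
        u - v < min η (min (δ' * η) (ε / (12 * M * b))) →
        |psiFam K h u - psiFam K h v| < ε by
      rcases le_total y x with hc | hc
      · exact H x hx y hy hc (by linarith [(abs_lt.mp hxy).2])
      · rw [abs_sub_comm]
        exact H y hy x hx hc (by linarith [(abs_lt.mp hxy).1])
    intro u hu v hv hvu hd
    have hdη : u - v < η := lt_of_lt_of_le hd (min_le_left _ _)
    have hdδ' : u - v < δ' * η :=
      lt_of_lt_of_le hd (le_trans (min_le_right _ _) (min_le_left _ _))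
    have hdε : u - v < ε / (12 * M * b) :=
      lt_of_lt_of_le hd (le_trans (min_le_right _ _) (min_le_right _ _))
    rcases lt_or_ge v η with hcase | hcase
    · -- small case: both u, v < 2η
      have hu2 : u < 2 * η := by linarith
      have b1 := key h hh1 u hu.1
      have b2 := key h hh1 v hv.1
      have htri : |psiFam K h u - psiFam K h v| ≤ |psiFam K h u| + |psiFam K h v| :=
        abs_sub _ _
      have hMη : M * η ≤ ε / 8 := by
        rw [le_div_iff₀ (by positivity : (0:ℝ) < 8 * M + 8)] at hηε
        rw [le_div_iff₀ (by norm_num : (0:ℝ) < 8)]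
        nlinarith
      have q1 : u ^ 2 ≤ (2 * η) ^ 2 := pow_le_pow_left₀ hu.1 hu2.le 2
      have q2 : v ^ 2 ≤ η ^ 2 := pow_le_pow_left₀ hv.1 hcase.le 2
      have q3 : M * η * η ≤ ε / 8 * 1 := mul_le_mul hMη hη1 hη0.le (by positivity)
      have q4 : M * u ^ 2 ≤ M * (2 * η) ^ 2 := mul_le_mul_of_nonneg_left q1 hM0.le
      have q5 : M * v ^ 2 ≤ M * η ^ 2 := mul_le_mul_of_nonneg_left q2 hM0.le
      nlinarith [q3, q4, q5, htri, b1, b2, hε]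
    · -- main case: η ≤ v
      have hv0 : 0 < v := lt_of_lt_of_le hη0 hcase
      have hu0 : 0 < u := lt_of_lt_of_le hv0 hvu
      have hid := psi_diff K h hKm hh hMb hh1 hv0.le hvu
      -- bound on A
      have hA : |∫ θ in (0:ℝ)..u, Kext K (θ / u) * h θ| ≤ M * b := by
        have this : ‖∫ θ in (0:ℝ)..u, Kext K (θ / u) * h θ‖ ≤ M * |u - 0| :=
          intervalIntegral.norm_integral_le_of_norm_le_const
            (fun t _ => prod_bound hMb hh1 u t)
        rw [Real.norm_eq_abs, sub_zero, abs_of_nonneg hu0.le] at this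
        calc |∫ θ in (0:ℝ)..u, Kext K (θ / u) * h θ| ≤ M * u := this
          _ ≤ M * b := by nlinarith [hu.2]
      -- integrability of the difference integrand
      have hdiffmeas : Measurable (fun t => (Kext K (t / u) - Kext K (t / v)) * h t) :=
        (((hKm.comp (measurable_id.div_const u)).sub
          (hKm.comp (measurable_id.div_const v))).mul hh)
      have hdiffbd : ∀ t, |(Kext K (t / u) - Kext K (t / v)) * h t| ≤ 2 * M := by
        intro t
        rw [abs_mul]
        calc |Kext K (t / u) - Kext K (t / v)| * |h t| ≤ (M + M) * 1 := by
              apply mul_le_mul _ (hh1 t) (abs_nonneg _) (by positivity)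
              exact le_trans (abs_sub _ _) (add_le_add (hMb _) (hMb _))
          _ = 2 * M := by ring
      have hint1 : IntervalIntegrable (fun t => (Kext K (t / u) - Kext K (t / v)) * h t)
          volume 0 v := intervalIntegrable_of_bounded hdiffmeas hdiffbd
      have hint2 : IntervalIntegrable (fun t => (Kext K (t / u) - Kext K (t / v)) * h t)
          volume v u := intervalIntegrable_of_bounded hdiffmeas hdiffbd
      -- bound on the first piece of B
      have hB1 : |∫ θ in (0:ℝ)..v, (Kext K (θ / u) - Kext K (θ / v)) * h θ|
          ≤ (ε / (2 * b ^ 2 + 2)) * b := by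
        have hptw : ∀ t ∈ Set.uIoc (0:ℝ) v,
            ‖(Kext K (t / u) - Kext K (t / v)) * h t‖ ≤ ε / (2 * b ^ 2 + 2) := by
          intro t ht
          rw [uIoc_of_le hv0.le] at ht
          obtain ⟨ht0, htv⟩ := ht
          have htu : t ≤ u := le_trans htv hvu
          have hmem1 : t / u ∈ Icc (0:ℝ) 1 :=
            ⟨div_nonneg ht0.le hu0.le, (div_le_one hu0).mpr htu⟩
          have hmem2 : t / v ∈ Icc (0:ℝ) 1 :=
            ⟨div_nonneg ht0.le hv0.le, (div_le_one hv0).mpr htv⟩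
          have hKe1 : Kext K (t / u) = K (t / u) := if_pos hmem1
          have hKe2 : Kext K (t / v) = K (t / v) := if_pos hmem2
          have hdist : dist (t / u) (t / v) < δ' := by
            rw [Real.dist_eq]
            have hle : t / u ≤ t / v := by gcongr <;> exact ht0.le
            rw [abs_of_nonpos (by linarith)]
            rw [neg_sub, div_sub_div _ _ hv0.ne' hu0.ne', div_lt_iff₀ (by positivity)]
            nlinarith [mul_le_mul_of_nonneg_right htv (sub_nonneg.mpr hvu),
              mul_lt_mul_of_pos_left hdδ' hv0,
              mul_le_mul_of_nonneg_left (le_trans hcase hvu)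
                (by positivity : (0:ℝ) ≤ δ' * v)]
          have hKK := hK' _ hmem1 _ hmem2 hdist
          rw [Real.dist_eq] at hKK
          rw [Real.norm_eq_abs, abs_mul, hKe1, hKe2]
          calc |K (t / u) - K (t / v)| * |h t| ≤ (ε / (2 * b ^ 2 + 2)) * 1 :=
                mul_le_mul hKK.le (hh1 t) (abs_nonneg _) (by positivity)
            _ = ε / (2 * b ^ 2 + 2) := mul_one _
        have := intervalIntegral.norm_integral_le_of_norm_le_const hptw
        rw [Real.norm_eq_abs, sub_zero, abs_of_nonneg hv0.le] at this
        calc |∫ θ in (0:ℝ)..v, (Kext K (θ / u) - Kext K (θ / v)) * h θ|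
            ≤ (ε / (2 * b ^ 2 + 2)) * v := this
          _ ≤ (ε / (2 * b ^ 2 + 2)) * b := by
              apply mul_le_mul_of_nonneg_left hv.2 (by positivity)
      -- bound on second piece of B
      have hB2 : |∫ θ in v..u, (Kext K (θ / u) - Kext K (θ / v)) * h θ|
          ≤ 2 * M * (u - v) := by
        have this : ‖∫ θ in v..u, (Kext K (θ / u) - Kext K (θ / v)) * h θ‖
            ≤ 2 * M * |u - v| :=
          intervalIntegral.norm_integral_le_of_norm_le_const (fun t _ => hdiffbd t)
        rwa [Real.norm_eq_abs, abs_of_nonneg (sub_nonneg.mpr hvu)] at this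
      have hBsplit : ∫ θ in (0:ℝ)..u, (Kext K (θ / u) - Kext K (θ / v)) * h θ
          = (∫ θ in (0:ℝ)..v, (Kext K (θ / u) - Kext K (θ / v)) * h θ)
            + ∫ θ in v..u, (Kext K (θ / u) - Kext K (θ / v)) * h θ :=
        (intervalIntegral.integral_add_adjacent_intervals hint1 hint2).symm
      have hB : |∫ θ in (0:ℝ)..u, (Kext K (θ / u) - Kext K (θ / v)) * h θ|
          ≤ (ε / (2 * b ^ 2 + 2)) * b + 2 * M * (u - v) := by
        rw [hBsplit]
        exact le_trans (abs_add_le _ _) (add_le_add hB1 hB2)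
      -- assemble
      rw [hid]
      have hfinal : |(u - v) * (∫ θ in (0:ℝ)..u, Kext K (θ / u) * h θ) +
          v * ∫ θ in (0:ℝ)..u, (Kext K (θ / u) - Kext K (θ / v)) * h θ|
          ≤ (u - v) * (M * b) + v * ((ε / (2 * b ^ 2 + 2)) * b + 2 * M * (u - v)) := by
        refine le_trans (abs_add_le _ _) (add_le_add ?_ ?_)
        · rw [abs_mul, abs_of_nonneg (by linarith)]
          exact mul_le_mul_of_nonneg_left hA (by linarith)
        · rw [abs_mul, abs_of_nonneg hv0.le]
          exact mul_le_mul_of_nonneg_left hB hv0.le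
      exact final_arith ε M b u v _ hε hM0 hb hv.1 hv.2 hvu hdε hfinal
  · -- Part 3: quotient estimate
    intro h hh hh01 y hy z hz
    have hh1 := habs1 h hh01
    set m : ℝ := max y z with hm
    have hym : y ≤ m := le_max_left _ _
    have hzm : z ≤ m := le_max_right _ _
    have hm0 : 0 ≤ m := le_trans hy.1.le hym
    have hquot : ∀ w : ℝ, w ∈ Ioc (0:ℝ) b → w ≤ m →
        psiFam K h w / w = ∫ θ in (0:ℝ)..m, Kext K (θ / w) * h θ := by
      intro w hw hwm
      unfold psiFam
      rw [mul_comm, mul_div_assoc, div_self hw.1.ne', mul_one]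
      exact (integral_Kext_ext K h hKm hh hMb hh1 hw.1 hwm).symm
    rw [hquot z hz hzm, hquot y hy hym]
    rw [← intervalIntegral.integral_sub (prod_integrable hKm hh hMb hh1 z 0 m)
      (prod_integrable hKm hh hMb hh1 y 0 m)]
    have heq : ∀ θ : ℝ, Kext K (θ / z) * h θ - Kext K (θ / y) * h θ
        = (Kext K (θ / z) - Kext K (θ / y)) * h θ := fun θ => by ring
    simp only [heq]
    calc |∫ θ in (0:ℝ)..m, (Kext K (θ / z) - Kext K (θ / y)) * h θ|
        ≤ ∫ θ in (0:ℝ)..m, |Kext K (θ / z) - Kext K (θ / y)| * |h θ| := by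
          have := intervalIntegral.norm_integral_le_integral_norm
            (f := fun θ => (Kext K (θ / z) - Kext K (θ / y)) * h θ) (μ := volume) hm0
          simpa [Real.norm_eq_abs, abs_mul] using this
      _ ≤ ∫ θ in (0:ℝ)..m, |Kext K (θ / z) - Kext K (θ / y)| := by
          apply intervalIntegral.integral_mono_on hm0
          · apply intervalIntegrable_of_bounded (M := 2 * M)
            · exact (((hKm.comp (measurable_id.div_const z)).sub
                (hKm.comp (measurable_id.div_const y))).abs.mul hh.abs)
            · intro t
              rw [abs_mul, abs_abs, abs_abs]
              calc |Kext K (t / z) - Kext K (t / y)| * |h t| ≤ (M + M) * 1 := by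
                    apply mul_le_mul _ (hh1 t) (abs_nonneg _) (by positivity)
                    exact le_trans (abs_sub _ _) (add_le_add (hMb _) (hMb _))
                _ = 2 * M := by ring
          · apply intervalIntegrable_of_bounded (M := 2 * M)
            · exact ((hKm.comp (measurable_id.div_const z)).sub
                (hKm.comp (measurable_id.div_const y))).abs
            · intro t
              rw [abs_abs]
              exact le_trans (abs_sub _ _) (by linarith [hMb (t / z), hMb (t / y)])
          · intro t _
            calc |Kext K (t / z) - Kext K (t / y)| * |h t|
                ≤ |Kext K (t / z) - Kext K (t / y)| * 1 :=
                  mul_le_mul_of_nonneg_left (hh1 t) (abs_nonneg _)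
              _ = _ := mul_one _
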